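/- arXiv:2005.10726 — 3 statements merged into one kernel-verified Lean document; each statement's English description precedes it below -/
import Mathlib

section
/- Let F be the Fibonacci sequence with F_1 = F_2 = 1 and F_n = F_{n-1} + F_{n-2}. Then for every n ≥ 2, F_n equals the number of binary strings w_1 w_2 ... w_{n-2} of length n-2 containing no substring w_{2i} w_{2i+1} = 10 and no substring w_{2i-1} w_{2i} = 01. -/
def F : ℕ → ℕ
  | 0 => 0
  | 1 => 1
  | n + 2 => F (n + 1) + F n

def Q (m : ℕ) (x : Fin m → Bool) : Prop :=
  ∀ j : ℕ, ∀ h : j + 1 < m, x ⟨j, Nat.lt_of_succ_lt h⟩ = true ∨ x ⟨j + 1, h⟩ = true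

lemma Q_cons {m : ℕ} (b : Bool) (x : Fin m → Bool) :
    Q (m + 1) (Fin.cons b x) ↔ Q m x ∧ ∀ h : 0 < m, b = true ∨ x ⟨0, h⟩ = true := by
  constructor
  · intro H
    constructor
    · intro j h
      have h' : (j + 1) + 1 < m + 1 := by omega
      have := H (j + 1) h'
      have e1 : (⟨j + 1, Nat.lt_of_succ_lt h'⟩ : Fin (m + 1)) = Fin.succ ⟨j, Nat.lt_of_succ_lt h⟩ := rfl
      have e2 : (⟨j + 2, h'⟩ : Fin (m + 1)) = Fin.succ ⟨j + 1, h⟩ := rfl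
      rwa [e1, e2, Fin.cons_succ, Fin.cons_succ] at this
    · intro h
      have h' : 0 + 1 < m + 1 := by omega
      have := H 0 h'
      have e1 : (⟨0, Nat.lt_of_succ_lt h'⟩ : Fin (m + 1)) = 0 := rfl
      have e2 : (⟨0 + 1, h'⟩ : Fin (m + 1)) = Fin.succ ⟨0, h⟩ := rfl
      rwa [e1, e2, Fin.cons_zero, Fin.cons_succ] at this
  · rintro ⟨hQ, h0⟩ j h
    match j with
    | 0 =>
      have hm : 0 < m := by omega
      have e1 : (⟨0, Nat.lt_of_succ_lt h⟩ : Fin (m + 1)) = 0 := rfl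
      have e2 : (⟨0 + 1, h⟩ : Fin (m + 1)) = Fin.succ ⟨0, hm⟩ := rfl
      rw [e1, e2, Fin.cons_zero, Fin.cons_succ]
      exact h0 hm
    | k + 1 =>
      have hk : k + 1 < m := by omega
      have e1 : (⟨k + 1, Nat.lt_of_succ_lt h⟩ : Fin (m + 1)) = Fin.succ ⟨k, Nat.lt_of_succ_lt hk⟩ := rfl
      have e2 : (⟨k + 1 + 1, h⟩ : Fin (m + 1)) = Fin.succ ⟨k + 1, hk⟩ := rfl
      rw [e1, e2, Fin.cons_succ, Fin.cons_succ]
      exact hQ k hk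

noncomputable def QEquiv (m : ℕ) :
    {x : Fin (m + 2) → Bool // Q (m + 2) x} ≃
      {x : Fin (m + 1) → Bool // Q (m + 1) x} ⊕ {x : Fin m → Bool // Q m x} where
  toFun x :=
    if hx : (x : Fin (m + 2) → Bool) 0 = true then
      Sum.inl ⟨Fin.tail x.1, by
        have := x.2
        rw [show (x.1 : Fin (m+2) → Bool) = Fin.cons (x.1 0) (Fin.tail x.1) from (Fin.cons_self_tail x.1).symm, Q_cons] at this
        exact this.1⟩
    else
      Sum.inr ⟨Fin.tail (Fin.tail x.1), by
        have := x.2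
        rw [show (x.1 : Fin (m+2) → Bool) = Fin.cons (x.1 0) (Fin.cons (Fin.tail x.1 0) (Fin.tail (Fin.tail x.1))) from by
          rw [Fin.cons_self_tail, Fin.cons_self_tail], Q_cons] at this
        have := this.1
        rw [Q_cons] at this
        exact this.1⟩
  invFun y :=
    match y with
    | Sum.inl z => ⟨Fin.cons true z.1, by
        rw [Q_cons]
        exact ⟨z.2, fun _ => Or.inl rfl⟩⟩
    | Sum.inr z => ⟨Fin.cons false (Fin.cons true z.1), by
        rw [Q_cons]
        refine ⟨?_, fun h => Or.inr ?_⟩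
        · rw [Q_cons]; exact ⟨z.2, fun _ => Or.inl rfl⟩
        · have : (⟨0, h⟩ : Fin (m + 1)) = 0 := rfl
          rw [this, Fin.cons_zero]⟩
  left_inv x := by
    dsimp only
    by_cases hx : (x : Fin (m + 2) → Bool) 0 = true
    · simp only [hx, dif_pos]
      apply Subtype.ext
      simp only
      rw [← hx, Fin.cons_self_tail]
    · rw [dif_neg hx]
      apply Subtype.ext
      simp only
      have h1 : x.1 (Fin.succ 0) = true := by
        have := x.2 0 (by omega)
        have e1 : (⟨0, by omega⟩ : Fin (m + 2)) = 0 := rfl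
        have e2 : (⟨0 + 1, by omega⟩ : Fin (m + 2)) = Fin.succ 0 := rfl
        rcases this with h | h
        · exact absurd h hx
        · exact h
      have hx0 : x.1 0 = false := by
        cases h : x.1 0
        · rfl
        · exact absurd h hx
      have ht0 : Fin.tail x.1 0 = true := h1
      calc Fin.cons false (Fin.cons true (Fin.tail (Fin.tail x.1)))
          = Fin.cons (x.1 0) (Fin.cons (Fin.tail x.1 0) (Fin.tail (Fin.tail x.1))) := by
            rw [hx0, ht0]
        _ = x.1 := by rw [Fin.cons_self_tail, Fin.cons_self_tail]
  right_inv y := by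
    match y with
    | Sum.inl z =>
      dsimp only
      rw [dif_pos (show (Fin.cons true z.1 : Fin (m + 2) → Bool) 0 = true from Fin.cons_zero _ _)]
      congr 1
    | Sum.inr z =>
      dsimp only
      rw [dif_neg (by simp : ¬(Fin.cons false (Fin.cons true z.1) : Fin (m + 2) → Bool) 0 = true)]
      congr 1

lemma card_Q : ∀ m : ℕ, Nat.card {x : Fin m → Bool // Q m x} = Nat.fib (m + 2)
  | 0 => by
    have e : {x : Fin 0 → Bool // Q 0 x} ≃ (Fin 0 → Bool) :=
      Equiv.subtypeUnivEquiv (fun x j h => by omega)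
    rw [Nat.card_congr e, Nat.card_eq_fintype_card]
    simp
  | 1 => by
    have e : {x : Fin 1 → Bool // Q 1 x} ≃ (Fin 1 → Bool) :=
      Equiv.subtypeUnivEquiv (fun x j h => by omega)
    rw [Nat.card_congr e, Nat.card_eq_fintype_card]
    simp [Nat.fib]
  | (m + 2) => by
    rw [Nat.card_congr (QEquiv m), Nat.card_sum, card_Q (m + 1), card_Q m]
    have h := Nat.fib_add_two (n := m + 2)
    rw [show m + 1 + 2 = m + 2 + 1 from rfl]
    omega

lemma F_eq_fib : ∀ n : ℕ, F n = Nat.fib n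
  | 0 => rfl
  | 1 => rfl
  | (n + 2) => by
    rw [F, Nat.fib_add_two, F_eq_fib (n + 1), F_eq_fib n]
    omega

def φ (m : ℕ) (w : Fin m → Bool) : Fin m → Bool :=
  fun j => xor (w j) (decide ((j : ℕ) % 2 = 1))

lemma φ_invol (m : ℕ) : Function.Involutive (φ m) := by
  intro w
  funext j
  simp [φ, Bool.xor_assoc]

lemma P_iff_Q (m : ℕ) (w : Fin m → Bool) :
    (∀ j : ℕ, ∀ h : j + 1 < m,
      (j % 2 = 0 → ¬(w ⟨j, Nat.lt_of_succ_lt h⟩ = false ∧ w ⟨j + 1, h⟩ = true)) ∧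
      (j % 2 = 1 → ¬(w ⟨j, Nat.lt_of_succ_lt h⟩ = true ∧ w ⟨j + 1, h⟩ = false)))
    ↔ Q m (φ m w) := by
  constructor
  · intro H j h
    have := H j h
    rcases Nat.even_or_odd j with hj | hj
    · have hj0 : j % 2 = 0 := Nat.even_iff.mp hj
      have hj1 : (j + 1) % 2 = 1 := by omega
      have := this.1 hj0
      simp only [φ, hj0, hj1]
      cases hw1 : w ⟨j, Nat.lt_of_succ_lt h⟩ <;> cases hw2 : w ⟨j + 1, h⟩ <;>
        simp_all
    · have hj0 : j % 2 = 1 := Nat.odd_iff.mp hj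
      have hj1 : (j + 1) % 2 = 0 := by omega
      have := this.2 hj0
      simp only [φ, hj0, hj1]
      cases hw1 : w ⟨j, Nat.lt_of_succ_lt h⟩ <;> cases hw2 : w ⟨j + 1, h⟩ <;>
        simp_all
  · intro H j h
    have := H j h
    simp only [φ] at this
    rcases Nat.even_or_odd j with hj | hj
    · have hj0 : j % 2 = 0 := Nat.even_iff.mp hj
      have hj1 : (j + 1) % 2 = 1 := by omega
      simp only [hj0, hj1] at this
      constructor
      · intro _
        cases hw1 : w ⟨j, Nat.lt_of_succ_lt h⟩ <;> cases hw2 : w ⟨j + 1, h⟩ <;> simp_all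
      · intro hc; omega
    · have hj0 : j % 2 = 1 := Nat.odd_iff.mp hj
      have hj1 : (j + 1) % 2 = 0 := by omega
      simp only [hj0, hj1] at this
      constructor
      · intro hc; omega
      · intro _
        cases hw1 : w ⟨j, Nat.lt_of_succ_lt h⟩ <;> cases hw2 : w ⟨j + 1, h⟩ <;> simp_all

theorem stmt_3 (n : ℕ) (hn : 2 ≤ n) :
    Nat.card {w : Fin (n - 2) → Bool //
      ∀ j : ℕ, ∀ h : j + 1 < n - 2,
        (j % 2 = 0 → ¬(w ⟨j, Nat.lt_of_succ_lt h⟩ = false ∧ w ⟨j + 1, h⟩ = true)) ∧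
        (j % 2 = 1 → ¬(w ⟨j, Nat.lt_of_succ_lt h⟩ = true ∧ w ⟨j + 1, h⟩ = false))} = F n := by
  obtain ⟨m, rfl⟩ := Nat.exists_eq_add_of_le hn
  have hm : 2 + m - 2 = m := by omega
  have e : {w : Fin (2 + m - 2) → Bool //
      ∀ j : ℕ, ∀ h : j + 1 < 2 + m - 2,
        (j % 2 = 0 → ¬(w ⟨j, Nat.lt_of_succ_lt h⟩ = false ∧ w ⟨j + 1, h⟩ = true)) ∧
        (j % 2 = 1 → ¬(w ⟨j, Nat.lt_of_succ_lt h⟩ = true ∧ w ⟨j + 1, h⟩ = false))}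
      ≃ {x : Fin (2 + m - 2) → Bool // Q (2 + m - 2) x} :=
    Equiv.subtypeEquiv ((φ_invol (2 + m - 2)).toPerm _) (fun w => P_iff_Q _ w)
  rw [Nat.card_congr e]
  rw [F_eq_fib]
  rw [show 2 + m - 2 = m from hm]
  rw [card_Q m]
  congr 1
  omega
end

section
/- For every n ≥ 1, every binary string w = w_1 ... w_{2n-1} of length 2n-1 avoiding the substring w_{2i-1} w_{2i} = 10 (for all i) and the substring w_{2i} w_{2i+1} = 01 (for all i) admits an n × n matrix M contained as a submatrix in the 3n × 3n upper triangular matrix U_{3n} such that M(i,i) = w_{2i-1} for all i ∈ [n] and M(i, i+1) = w_{2i} for all i ∈ [n-1]. -/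
theorem stmt_12 (n : ℕ) (hn : 1 ≤ n) (w : Fin (2 * n - 1) → Bool)
    (hw : ∀ j : ℕ, ∀ h : j + 1 < 2 * n - 1,
      (j % 2 = 0 → ¬(w ⟨j, Nat.lt_of_succ_lt h⟩ = true ∧ w ⟨j + 1, h⟩ = false)) ∧
      (j % 2 = 1 → ¬(w ⟨j, Nat.lt_of_succ_lt h⟩ = false ∧ w ⟨j + 1, h⟩ = true))) :
    ∃ f g : Fin n → Fin (3 * n), StrictMono f ∧ StrictMono g ∧
      (∀ i : Fin n, ∀ h : 2 * i.val < 2 * n - 1, ((f i ≤ g i) ↔ w ⟨2 * i.val, h⟩ = true)) ∧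
      (∀ i : Fin n, ∀ h' : i.val + 1 < n, ∀ h : 2 * i.val + 1 < 2 * n - 1,
        ((f i ≤ g ⟨i.val + 1, h'⟩) ↔ w ⟨2 * i.val + 1, h⟩ = true)) := by
  classical
  set W : ℕ → Bool := fun j => if h : j < 2 * n - 1 then w ⟨j, h⟩ else false with hWdef
  have hW : ∀ j (h : j < 2 * n - 1), w ⟨j, h⟩ = W j := fun j h => by simp [hWdef, h]
  -- w(2i)=true ⇒ w(2i+1)=true
  have HW1 : ∀ i : ℕ, 2 * i + 1 < 2 * n - 1 → W (2 * i) = true → W (2 * i + 1) = true := by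
    intro i h ht
    have h2 := (hw (2 * i) h).1 (by omega)
    rw [hW _ (Nat.lt_of_succ_lt h), hW _ h] at h2
    by_contra hf
    exact h2 ⟨ht, by simpa using hf⟩
  -- w(2i-1)=false ⇒ w(2i)=false  (for i > 0)
  have HW2 : ∀ i : ℕ, 0 < i → 2 * i < 2 * n - 1 → W (2 * i - 1) = false → W (2 * i) = false := by
    intro i hi h hf
    have hh : (2 * i - 1) + 1 < 2 * n - 1 := by omega
    have h2 := (hw (2 * i - 1) hh).2 (by omega)
    rw [hW _ (Nat.lt_of_succ_lt hh), hW _ hh] at h2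
    rw [show 2 * i - 1 + 1 = 2 * i from by omega] at h2
    by_contra ht
    exact h2 ⟨hf, by simpa using ht⟩
  set F : ℕ → ℕ := fun i => 3 * i + (if W (2 * i) = true then 0 else 2) with hFdef
  set G : ℕ → ℕ := fun i => if 0 < i ∧ W (2 * i - 1) = false then 3 * i - 2
      else 3 * i + (if W (2 * i) = true then 1 else 0) with hGdef
  have hFub : ∀ i, F i ≤ 3 * i + 2 := by intro i; simp only [hFdef]; split <;> omega
  have hFlb : ∀ i, 3 * i ≤ F i := by intro i; simp only [hFdef]; split <;> omega
  have hGub : ∀ i, G i ≤ 3 * i + 1 := by intro i; simp only [hGdef]; split <;> [omega; (split <;> omega)]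
  have hGlb : ∀ i, 3 * i - 2 ≤ G i := by intro i; simp only [hGdef]; split <;> [omega; (split <;> omega)]
  have hFlt : ∀ i, i < n → F i < 3 * n := fun i hi => lt_of_le_of_lt (hFub i) (by omega)
  have hGlt : ∀ i, i < n → G i < 3 * n := fun i hi => lt_of_le_of_lt (hGub i) (by omega)
  -- key adjacent monotonicity for G
  have hGkey : ∀ i, i + 1 < n → G i < G (i + 1) := by
    intro i hi
    have hre : 2 * (i + 1) - 1 = 2 * i + 1 := by omega
    by_cases hb : W (2 * i + 1) = false
    · have ha : W (2 * i) = false := by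
        by_contra ht
        have := HW1 i (by omega) (by simpa using ht)
        rw [this] at hb; exact absurd hb (by simp)
      have hg1 : G (i + 1) = 3 * i + 1 := by
        simp only [hGdef, hre]
        rw [if_pos ⟨Nat.succ_pos i, hb⟩]; omega
      rw [hg1]
      simp only [hGdef]
      split
      · omega
      · rw [if_neg (by simp [ha])]; omega
    · have hg1 : 3 * (i + 1) ≤ G (i + 1) := by
        simp only [hGdef, hre]
        rw [if_neg (by rintro ⟨-, hc⟩; exact hb hc)]; omega
      have := hGub i; omega
  refine ⟨fun i => ⟨F i.val, hFlt _ i.isLt⟩, fun i => ⟨G i.val, hGlt _ i.isLt⟩, ?_, ?_, ?_, ?_⟩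
  · intro i j hij
    rw [Fin.lt_def] at hij ⊢
    simp only
    have h1 := hFub i.val
    have h2 := hFlb j.val
    omega
  · intro i j hij
    rw [Fin.lt_def] at hij ⊢
    simp only
    rcases Nat.lt_or_ge (i.val + 1) j.val with hc | hc
    · have h1 := hGub i.val
      have h2 := hGlb j.val
      omega
    · have hj : j.val = i.val + 1 := by omega
      rw [hj]
      exact hGkey i.val (by rw [← hj]; exact j.isLt)
  · intro i h
    rw [hW, Fin.mk_le_mk]
    by_cases ha : W (2 * i.val) = true
    · have hG1 : G i.val = 3 * i.val + 1 := by
        simp only [hGdef]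
        rw [if_neg, if_pos ha]
        rintro ⟨hi0, hfalse⟩
        have := HW2 i.val hi0 h hfalse
        rw [this] at ha; exact absurd ha (by simp)
      simp only [ha, iff_true, hG1]
      have hF1 : F i.val = 3 * i.val := by simp only [hFdef]; rw [if_pos ha]; omega
      omega
    · have hF1 : F i.val = 3 * i.val + 2 := by simp only [hFdef]; rw [if_neg ha]
      have h1 := hGub i.val
      simp only [Bool.not_eq_true] at ha
      simp only [ha, Bool.false_eq_true, iff_false]
      omega
  · intro i h' h
    rw [hW, Fin.mk_le_mk]
    simp only
    have hre : 2 * (i.val + 1) - 1 = 2 * i.val + 1 := by omega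
    by_cases hb : W (2 * i.val + 1) = true
    · have hg1 : 3 * (i.val + 1) ≤ G (i.val + 1) := by
        simp only [hGdef, hre]
        rw [if_neg (by rintro ⟨-, hc⟩; rw [hb] at hc; exact absurd hc (by simp))]; omega
      have := hFub i.val
      simp [hb]; omega
    · have hbf : W (2 * i.val + 1) = false := by simpa using hb
      have ha : W (2 * i.val) = false := by
        by_contra ht
        have := HW1 i.val h (by simpa using ht)
        rw [this] at hbf; exact absurd hbf (by simp)
      have hg1 : G (i.val + 1) = 3 * i.val + 1 := by
        simp only [hGdef, hre]
        rw [if_pos ⟨Nat.succ_pos _, hbf⟩]; omega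
      have hF1 : F i.val = 3 * i.val + 2 := by simp only [hFdef]; rw [if_neg (by simp [ha])]
      simp only [hbf, Bool.false_eq_true, iff_false]
      omega
end

section
/- Let N : [r] × [s] → {0,1} be a binary matrix. Let al(N) denote the maximum over all rows and columns of N of the number of maximal constant intervals (runs) in that row or column. Let C(N) ⊆ [r-1] be the set of row indices i such that N(i,j) ≠ N(i+1,j) for some column j, and let R(N) ⊆ [s-1] be the set of column indices j such that N(i,j) ≠ N(i,j+1) for some row i. Then |R(N)| ≤ (al(N) - 1) · (2|C(N)| + 1). -/
/-- Column indices `j` (0-indexed, `j ∈ [s-1]`) where some row changes value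
between columns `j` and `j+1`. -/
def RSet {r s : ℕ} (N : Fin r → Fin s → Bool) : Finset (Fin (s - 1)) :=
  Finset.univ.filter (fun j =>
    ∃ i : Fin r,
      N i ⟨j.val, by have := j.isLt; omega⟩ ≠ N i ⟨j.val + 1, by have := j.isLt; omega⟩)

/-- Row indices `i` (0-indexed, `i ∈ [r-1]`) where some column changes value
between rows `i` and `i+1`. -/
def CSet {r s : ℕ} (N : Fin r → Fin s → Bool) : Finset (Fin (r - 1)) :=
  Finset.univ.filter (fun i =>
    ∃ j : Fin s,
      N ⟨i.val, by have := i.isLt; omega⟩ j ≠ N ⟨i.val + 1, by have := i.isLt; omega⟩ j)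

/-- `al(N)`: one plus the maximum number of adjacent unequal pairs along a single
row or column of `N`, i.e. the maximal number of runs in a line of `N`. -/
def alMat {r s : ℕ} (N : Fin r → Fin s → Bool) : ℕ :=
  1 + max
    (Finset.univ.sup (fun i : Fin r =>
      (Finset.univ.filter (fun j : Fin (s - 1) =>
        N i ⟨j.val, by have := j.isLt; omega⟩ ≠ N i ⟨j.val + 1, by have := j.isLt; omega⟩)).card))
    (Finset.univ.sup (fun j : Fin s =>
      (Finset.univ.filter (fun i : Fin (r - 1) =>
        N ⟨i.val, by have := i.isLt; omega⟩ j ≠ N ⟨i.val + 1, by have := i.isLt; omega⟩ j)).card))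

theorem stmt_13 {r s : ℕ} (N : Fin r → Fin s → Bool) :
    (RSet N).card ≤ (alMat N - 1) * (2 * (CSet N).card + 1) := by
  classical
  rcases Nat.eq_zero_or_pos r with hr | hr
  · have hemp : RSet N = ∅ := by
      ext j
      simp only [RSet, Finset.mem_filter, Finset.mem_univ, true_and, Finset.notMem_empty,
        iff_false, not_exists]
      intro i
      exact absurd i.isLt (by omega)
    simp [hemp]
  · set rowCh : Fin r → Finset (Fin (s - 1)) := fun i =>
      Finset.univ.filter (fun j : Fin (s - 1) =>
        N i ⟨j.val, by have := j.isLt; omega⟩ ≠ N i ⟨j.val + 1, by have := j.isLt; omega⟩)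
      with hrowCh
    set T : Finset (Fin r) := insert ⟨0, hr⟩
      ((CSet N).image (fun i => (⟨i.val + 1, by have := i.isLt; omega⟩ : Fin r))) with hT
    have hrowbound : ∀ i : Fin r, (rowCh i).card ≤ alMat N - 1 := by
      intro i
      have h1 : (rowCh i).card ≤ Finset.univ.sup (fun i : Fin r =>
          (Finset.univ.filter (fun j : Fin (s - 1) =>
            N i ⟨j.val, by have := j.isLt; omega⟩ ≠
              N i ⟨j.val + 1, by have := j.isLt; omega⟩)).card) :=
        Finset.le_sup (f := fun i : Fin r =>
          (Finset.univ.filter (fun j : Fin (s - 1) =>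
            N i ⟨j.val, by have := j.isLt; omega⟩ ≠
              N i ⟨j.val + 1, by have := j.isLt; omega⟩)).card) (Finset.mem_univ i)
      have h2 : alMat N - 1 = max
          (Finset.univ.sup (fun i : Fin r =>
            (Finset.univ.filter (fun j : Fin (s - 1) =>
              N i ⟨j.val, by have := j.isLt; omega⟩ ≠
                N i ⟨j.val + 1, by have := j.isLt; omega⟩)).card))
          (Finset.univ.sup (fun j : Fin s =>
            (Finset.univ.filter (fun i : Fin (r - 1) =>
              N ⟨i.val, by have := i.isLt; omega⟩ j ≠
                N ⟨i.val + 1, by have := i.isLt; omega⟩ j)).card)) := by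
        simp [alMat]
      rw [h2]
      exact le_trans h1 (le_max_left _ _)
    have hsub : RSet N ⊆ T.biUnion rowCh := by
      intro j hj
      simp only [RSet, Finset.mem_filter, Finset.mem_univ, true_and] at hj
      obtain ⟨i, hi⟩ := hj
      have key : ∀ n : ℕ, ∀ hn : n < r,
          N ⟨n, hn⟩ ⟨j.val, by have := j.isLt; omega⟩ ≠
            N ⟨n, hn⟩ ⟨j.val + 1, by have := j.isLt; omega⟩ →
          ∃ i' ∈ T, j ∈ rowCh i' := by
        intro n
        induction n with
        | zero =>
          intro hn h
          refine ⟨⟨0, hr⟩, Finset.mem_insert_self _ _, ?_⟩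
          simp only [hrowCh, Finset.mem_filter, Finset.mem_univ, true_and]
          exact h
        | succ m ih =>
          intro hn h
          by_cases hc : N ⟨m, by omega⟩ ⟨j.val, by have := j.isLt; omega⟩ ≠
              N ⟨m, by omega⟩ ⟨j.val + 1, by have := j.isLt; omega⟩
          · exact ih (by omega) hc
          · push_neg at hc
            have hdiff : N ⟨m, by omega⟩ ⟨j.val, by have := j.isLt; omega⟩ ≠
                  N ⟨m + 1, hn⟩ ⟨j.val, by have := j.isLt; omega⟩ ∨
                N ⟨m, by omega⟩ ⟨j.val + 1, by have := j.isLt; omega⟩ ≠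
                  N ⟨m + 1, hn⟩ ⟨j.val + 1, by have := j.isLt; omega⟩ := by
              by_contra hcon
              push_neg at hcon
              exact h (by rw [← hcon.1, ← hcon.2, hc])
            have hm : (⟨m, by omega⟩ : Fin (r - 1)) ∈ CSet N := by
              simp only [CSet, Finset.mem_filter, Finset.mem_univ, true_and]
              rcases hdiff with h1 | h1
              · exact ⟨⟨j.val, by have := j.isLt; omega⟩, h1⟩
              · exact ⟨⟨j.val + 1, by have := j.isLt; omega⟩, h1⟩
            refine ⟨⟨m + 1, hn⟩, ?_, ?_⟩
            · refine Finset.mem_insert_of_mem ?_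
              exact Finset.mem_image.mpr ⟨⟨m, by omega⟩, hm, rfl⟩
            · simp only [hrowCh, Finset.mem_filter, Finset.mem_univ, true_and]
              exact h
      exact Finset.mem_biUnion.mpr (key i.val i.isLt hi)
    have hTcard : T.card ≤ (CSet N).card + 1 := by
      calc T.card ≤ ((CSet N).image
            (fun i => (⟨i.val + 1, by have := i.isLt; omega⟩ : Fin r))).card + 1 :=
          Finset.card_insert_le _ _
        _ ≤ (CSet N).card + 1 := by
          exact Nat.add_le_add_right (Finset.card_image_le) 1
    calc (RSet N).card ≤ (T.biUnion rowCh).card := Finset.card_le_card hsub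
      _ ≤ ∑ i ∈ T, (rowCh i).card := Finset.card_biUnion_le
      _ ≤ ∑ _i ∈ T, (alMat N - 1) := Finset.sum_le_sum (fun i _ => hrowbound i)
      _ = T.card * (alMat N - 1) := by simp [Finset.sum_const]
      _ ≤ (2 * (CSet N).card + 1) * (alMat N - 1) :=
        Nat.mul_le_mul_right _ (by omega)
      _ = (alMat N - 1) * (2 * (CSet N).card + 1) := Nat.mul_comm _ _
end
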